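/- arXiv:1906.07780 — 5 statements merged into one kernel-verified Lean document; each statement's English description precedes it below -/
import Mathlib

section
/- Let X and Y be real-valued random variables defined on the same probability space, with laws L_X and L_Y. Then for any real numbers a ≤ b, P(a ≤ X ≤ b) ≤ (1/2)(1 + P(|X−Y| ≤ b−a) + d_TV(L_X, L_Y)), where d_TV denotes total variation distance. -/
open MeasureTheory

/-- Total variation distance between two measures on `ℝ`, as a supremum over
measurable sets of the absolute difference of (real-valued) measures. -/
noncomputable def tvDist (μ ν : Measure ℝ) : ℝ :=
  ⨆ A : {A : Set ℝ // MeasurableSet A}, |(μ A.1).toReal - (ν A.1).toReal|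

/-- If `X` and `Y` are real random variables on the same probability space, then for any
`a ≤ b`, `P(a ≤ X ≤ b) ≤ (1/2)(1 + P(|X − Y| ≤ b − a) + d_TV(L_X, L_Y))`. -/
theorem stmt0 {Ω : Type*} [MeasurableSpace Ω] (P : Measure Ω) [IsProbabilityMeasure P]
    (X Y : Ω → ℝ) (hX : Measurable X) (hY : Measurable Y)
    (a b : ℝ) (hab : a ≤ b) :
    (P {ω | a ≤ X ω ∧ X ω ≤ b}).toReal ≤
      (1 / 2) * (1 + (P {ω | |X ω - Y ω| ≤ b - a}).toReal + tvDist (P.map X) (P.map Y)) := by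
  set S : Set Ω := X ⁻¹' Set.Icc a b with hS
  set T : Set Ω := Y ⁻¹' Set.Icc a b with hT
  have hSm : MeasurableSet S := hX measurableSet_Icc
  have hTm : MeasurableSet T := hY measurableSet_Icc
  have hSeq : {ω | a ≤ X ω ∧ X ω ≤ b} = S := by
    ext ω; simp [hS, Set.mem_Icc]
  rw [hSeq]
  have hmapX : P.map X (Set.Icc a b) = P S := Measure.map_apply hX measurableSet_Icc
  have hmapY : P.map Y (Set.Icc a b) = P T := Measure.map_apply hY measurableSet_Icc
  -- Claim 1: P S - P T ≤ tvDist
  have hbdd : BddAbove (Set.range fun A : {A : Set ℝ // MeasurableSet A} =>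
      |((P.map X) A.1).toReal - ((P.map Y) A.1).toReal|) := by
    have : IsProbabilityMeasure (P.map X) := Measure.isProbabilityMeasure_map hX.aemeasurable
    have : IsProbabilityMeasure (P.map Y) := Measure.isProbabilityMeasure_map hY.aemeasurable
    refine ⟨2, ?_⟩
    rintro x ⟨A, rfl⟩
    have h1 : ((P.map X) A.1).toReal ≤ 1 := by
      have := prob_le_one (μ := P.map X) (s := A.1)
      simpa using ENNReal.toReal_le_of_le_ofReal one_pos.le (by simpa using this)
    have h2 : ((P.map Y) A.1).toReal ≤ 1 := by
      have := prob_le_one (μ := P.map Y) (s := A.1)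
      simpa using ENNReal.toReal_le_of_le_ofReal one_pos.le (by simpa using this)
    have h3 : 0 ≤ ((P.map X) A.1).toReal := ENNReal.toReal_nonneg
    have h4 : 0 ≤ ((P.map Y) A.1).toReal := ENNReal.toReal_nonneg
    rw [abs_sub_le_iff]; constructor <;> linarith
  have claim1 : (P S).toReal - (P T).toReal ≤ tvDist (P.map X) (P.map Y) := by
    have := le_ciSup hbdd (⟨Set.Icc a b, measurableSet_Icc⟩ : {A : Set ℝ // MeasurableSet A})
    calc (P S).toReal - (P T).toReal
        = ((P.map X) (Set.Icc a b)).toReal - ((P.map Y) (Set.Icc a b)).toReal := by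
          rw [hmapX, hmapY]
      _ ≤ |((P.map X) (Set.Icc a b)).toReal - ((P.map Y) (Set.Icc a b)).toReal| := le_abs_self _
      _ ≤ tvDist (P.map X) (P.map Y) := this
  -- Claim 2: P S + P T ≤ 1 + P {|X - Y| ≤ b - a}
  have hsub : S ∩ T ⊆ {ω | |X ω - Y ω| ≤ b - a} := by
    rintro ω ⟨⟨h1, h2⟩, ⟨h3, h4⟩⟩
    simp only [Set.mem_setOf_eq]
    rw [abs_sub_le_iff]; constructor <;> linarith
  have hunion : P S + P T = P (S ∪ T) + P (S ∩ T) := (measure_union_add_inter S hTm).symm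
  have hle : P S + P T ≤ 1 + P {ω | |X ω - Y ω| ≤ b - a} := by
    rw [hunion]
    exact add_le_add prob_le_one (measure_mono hsub)
  have hfin : ∀ s : Set Ω, P s ≠ ⊤ := fun s => measure_ne_top P s
  have claim2 : (P S).toReal + (P T).toReal ≤ 1 + (P {ω | |X ω - Y ω| ≤ b - a}).toReal := by
    have := ENNReal.toReal_mono (by finiteness) hle
    rw [ENNReal.toReal_add (hfin S) (hfin T)] at this
    rwa [ENNReal.toReal_add (by norm_num) (hfin _), ENNReal.toReal_one] at this
  linarith
end

section
/- Let X₁, X₂, … be i.i.d. copies of an integrable, centered real random variable X. For any t > 0, there exists b > 0 such that for all sequences of constants c₁, c₂, … with |cᵢ| ≤ b for all i and Σᵢ |cᵢ| ≤ 1, one has E|Σᵢ cᵢ Xᵢ| ≤ t. -/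
/-!
Truncating `X` at a large level and recentring writes `X = v X + (X - v X)` with `v X` bounded
by some `K`, centred, and `E|X - v X| ≤ t / 2`. The terms `cᵢ v(Xᵢ)` are independent, centred
and bounded, so `E (Σ cᵢ v(Xᵢ))² ≤ K² Σ cᵢ² ≤ K² b Σ |cᵢ| ≤ (t / 2)²` for `b = (t / 2K)²`, and
hence `E|Σ cᵢ v(Xᵢ)| ≤ t / 2`. The remainder needs no independence: by the triangle inequality
in `L¹`, `E|Σ cᵢ (Xᵢ - v Xᵢ)| ≤ Σ |cᵢ| E|X - v X| ≤ t / 2`.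
-/

open MeasureTheory ProbabilityTheory Filter Topology

theorem Measurable.truncation {α : Type*} [MeasurableSpace α] {g : α → ℝ} (hg : Measurable g)
    (A : ℝ) : Measurable (truncation g A) :=
  (measurable_id.indicator measurableSet_Ioc).comp hg

section

variable {Ω : Type*} [MeasurableSpace Ω] {μ : Measure Ω}

theorem tendsto_integral_abs_sub_truncation {g : Ω → ℝ} (hg : Integrable g μ) :
    Tendsto (fun A => ∫ ω, |g ω - truncation g A ω| ∂μ) atTop (𝓝 0) := by
  have h := tendsto_integral_filter_of_dominated_convergence (μ := μ) (l := atTop)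
    (F := fun A ω => |g ω - truncation g A ω|) (f := 0) (fun ω => |g ω| + |g ω|)
    (Eventually.of_forall fun A => (hg.1.sub hg.1.truncation).norm)
    (Eventually.of_forall fun A => Eventually.of_forall fun ω => by
      simpa only [Real.norm_eq_abs, abs_abs] using
        (abs_sub _ _).trans (add_le_add le_rfl (abs_truncation_le_abs_self g A ω)))
    (hg.abs.add hg.abs)
    (Eventually.of_forall fun ω => tendsto_const_nhds.congr' <| by
      filter_upwards [Ioi_mem_atTop |g ω|] with A hA
      rw [truncation_eq_self hA, sub_self, abs_zero, Pi.zero_apply])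
  simpa using h

theorem abs_integral_truncation_le {g : Ω → ℝ} [IsFiniteMeasure μ] (hg : Integrable g μ)
    (hcent : ∫ ω, g ω ∂μ = 0) (A : ℝ) :
    |∫ ω, truncation g A ω ∂μ| ≤ ∫ ω, |g ω - truncation g A ω| ∂μ := by
  have h : ∫ ω, (g ω - truncation g A ω) ∂μ = -∫ ω, truncation g A ω ∂μ := by
    rw [integral_sub hg hg.1.integrable_truncation, hcent, zero_sub]
  rw [← abs_neg, ← h]
  exact norm_integral_le_integral_norm (fun ω => g ω - truncation g A ω)

section Series

variable {E : Type*} [NormedAddCommGroup E]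

theorem aestronglyMeasurable_tsum {Z : ℕ → Ω → E} (hZ : ∀ i, AEStronglyMeasurable (Z i) μ)
    (hs : ∀ᵐ ω ∂μ, Summable fun i => Z i ω) :
    AEStronglyMeasurable (fun ω => ∑' i, Z i ω) μ :=
  aestronglyMeasurable_of_tendsto_ae atTop
    (fun _ => Finset.aestronglyMeasurable_sum _ fun i _ => hZ i)
    (hs.mono fun _ h => by simpa only [Finset.sum_apply] using h.hasSum.tendsto_sum_nat)

theorem tsum_lintegral_enorm_eq_ofReal {Z : ℕ → Ω → E} (hZ : ∀ i, Integrable (Z i) μ)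
    (hs : Summable fun i => ∫ ω, ‖Z i ω‖ ∂μ) :
    ∑' i, ∫⁻ ω, ‖Z i ω‖ₑ ∂μ = ENNReal.ofReal (∑' i, ∫ ω, ‖Z i ω‖ ∂μ) := by
  rw [ENNReal.ofReal_tsum_of_nonneg (fun i => integral_nonneg fun _ => norm_nonneg _) hs]
  exact tsum_congr fun i => (ofReal_integral_norm_eq_lintegral_enorm (hZ i)).symm

theorem ae_summable_norm_of_summable_integral_norm {Z : ℕ → Ω → E}
    (hZ : ∀ i, Integrable (Z i) μ) (hs : Summable fun i => ∫ ω, ‖Z i ω‖ ∂μ) :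
    ∀ᵐ ω ∂μ, Summable fun i => ‖Z i ω‖ :=
  summable_norm_of_tsum_eLpNorm_ne_top le_rfl (fun i => (hZ i).1) <| by
    simp_rw [eLpNorm_one_eq_lintegral_enorm]
    rw [tsum_lintegral_enorm_eq_ofReal hZ hs]
    exact ENNReal.ofReal_ne_top

theorem lintegral_enorm_tsum_le {Z : ℕ → Ω → E} (hZ : ∀ i, Integrable (Z i) μ)
    (hs : Summable fun i => ∫ ω, ‖Z i ω‖ ∂μ) :
    ∫⁻ ω, ‖∑' i, Z i ω‖ₑ ∂μ ≤ ENNReal.ofReal (∑' i, ∫ ω, ‖Z i ω‖ ∂μ) :=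
  calc ∫⁻ ω, ‖∑' i, Z i ω‖ₑ ∂μ ≤ ∫⁻ ω, ∑' i, ‖Z i ω‖ₑ ∂μ :=
        lintegral_mono fun _ => enorm_tsum_le_tsum_enorm
    _ = ∑' i, ∫⁻ ω, ‖Z i ω‖ₑ ∂μ := lintegral_tsum fun i => (hZ i).1.enorm
    _ = ENNReal.ofReal (∑' i, ∫ ω, ‖Z i ω‖ ∂μ) := tsum_lintegral_enorm_eq_ofReal hZ hs

variable [CompleteSpace E]

theorem integrable_tsum_of_summable_integral_norm {Z : ℕ → Ω → E}
    (hZ : ∀ i, Integrable (Z i) μ) (hs : Summable fun i => ∫ ω, ‖Z i ω‖ ∂μ) :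
    Integrable (fun ω => ∑' i, Z i ω) μ :=
  ⟨aestronglyMeasurable_tsum (fun i => (hZ i).1)
      ((ae_summable_norm_of_summable_integral_norm hZ hs).mono fun _ h => h.of_norm),
    (lintegral_enorm_tsum_le hZ hs).trans_lt ENNReal.ofReal_lt_top⟩

theorem integral_norm_tsum_le_tsum_integral_norm {Z : ℕ → Ω → E}
    (hZ : ∀ i, Integrable (Z i) μ) (hs : Summable fun i => ∫ ω, ‖Z i ω‖ ∂μ) :
    ∫ ω, ‖∑' i, Z i ω‖ ∂μ ≤ ∑' i, ∫ ω, ‖Z i ω‖ ∂μ := by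
  rw [integral_norm_eq_lintegral_enorm (integrable_tsum_of_summable_integral_norm hZ hs).1]
  exact ENNReal.toReal_le_of_le_ofReal
    (tsum_nonneg fun i => integral_nonneg fun _ => norm_nonneg _) (lintegral_enorm_tsum_le hZ hs)

end Series

theorem integral_abs_le_of_integral_sq_le [IsProbabilityMeasure μ] {g : Ω → ℝ} (hg : MemLp g 2 μ)
    {s : ℝ} (hs : 0 < s) (h : ∫ ω, g ω ^ 2 ∂μ ≤ s ^ 2) : ∫ ω, |g ω| ∂μ ≤ s := by
  -- AM-GM: `|x| ≤ x ^ 2 / (2 s) + s / 2`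
  have amgm : ∀ x : ℝ, |x| ≤ x ^ 2 / (2 * s) + s / 2 := fun x => by
    rw [div_add_div _ _ (by positivity) two_ne_zero, le_div_iff₀ (by positivity)]
    nlinarith [sq_nonneg (|x| - s), sq_abs x]
  calc ∫ ω, |g ω| ∂μ ≤ ∫ ω, (g ω ^ 2 / (2 * s) + s / 2) ∂μ :=
        integral_mono (hg.integrable one_le_two).abs
          ((hg.integrable_sq.div_const _).add (integrable_const _)) fun ω => amgm (g ω)
    _ = (∫ ω, g ω ^ 2 ∂μ) / (2 * s) + s / 2 := by
        rw [integral_add (hg.integrable_sq.div_const _) (integrable_const _), integral_div,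
          integral_const, probReal_univ, one_smul]
    _ ≤ s ^ 2 / (2 * s) + s / 2 := by gcongr
    _ = s := by field_simp; ring

theorem integral_sq_sum_of_iIndepFun [IsFiniteMeasure μ] {ι : Type*} {W : ι → Ω → ℝ}
    (hW : ∀ i, MemLp (W i) 2 μ) (hind : iIndepFun W μ) (hmean : ∀ i, ∫ ω, W i ω ∂μ = 0)
    (s : Finset ι) :
    ∫ ω, (∑ i ∈ s, W i ω) ^ 2 ∂μ = ∑ i ∈ s, ∫ ω, W i ω ^ 2 ∂μ := by
  have hsum_mean : ∫ ω, (∑ i ∈ s, W i) ω ∂μ = 0 := by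
    simp only [Finset.sum_apply]
    rw [integral_finsetSum _ fun i _ => (hW i).integrable one_le_two]
    simp [hmean]
  have hvar := IndepFun.variance_sum (s := s) (fun i _ => hW i)
    fun i _ j _ hij => hind.indepFun hij
  rw [variance_of_integral_eq_zero (Finset.aemeasurable_sum _ fun i _ => (hW i).aemeasurable)
    hsum_mean] at hvar
  simpa only [Finset.sum_apply, variance_of_integral_eq_zero (hW _).aemeasurable (hmean _)]
    using hvar

theorem integral_sq_tsum_le_of_iIndepFun [IsProbabilityMeasure μ] {W : ℕ → Ω → ℝ}
    (hW : ∀ i, Measurable (W i)) (hind : iIndepFun W μ) (hmean : ∀ i, ∫ ω, W i ω ∂μ = 0)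
    {a : ℕ → ℝ} (hWa : ∀ i ω, |W i ω| ≤ a i) (ha : Summable a) :
    ∫ ω, (∑' i, W i ω) ^ 2 ∂μ ≤ ∑' i, a i ^ 2 := by
  have : Nonempty Ω := nonempty_of_isProbabilityMeasure μ
  have ha0 : ∀ i, 0 ≤ a i := fun i => (abs_nonneg _).trans (hWa i (Classical.arbitrary Ω))
  have ha2 : Summable fun i => a i ^ 2 :=
    .of_nonneg_of_le (fun i => sq_nonneg _)
      (fun i => by rw [sq]; exact mul_le_mul_of_nonneg_left (ha.le_tsum i fun j _ => ha0 j) (ha0 i))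
      (ha.mul_right (∑' i, a i))
  have hsummable : ∀ ω, Summable fun i => W i ω := fun ω =>
    .of_norm_bounded ha fun i => hWa i ω
  have hpartial : ∀ N ω, |∑ i ∈ Finset.range N, W i ω| ≤ ∑' i, a i := fun N ω =>
    (Finset.abs_sum_le_sum_abs _ _).trans <| (Finset.sum_le_sum fun i _ => hWa i ω).trans <|
      ha.sum_le_tsum _ fun i _ => ha0 i
  have hlim : Tendsto (fun N => ∫ ω, (∑ i ∈ Finset.range N, W i ω) ^ 2 ∂μ) atTop
      (𝓝 (∫ ω, (∑' i, W i ω) ^ 2 ∂μ)) :=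
    tendsto_integral_of_dominated_convergence (fun _ => (∑' i, a i) ^ 2)
      (fun N => ((Finset.measurable_sum _ fun i _ => hW i).pow_const 2).aestronglyMeasurable)
      (integrable_const _)
      (fun N => Eventually.of_forall fun ω => by
        rw [Real.norm_eq_abs, abs_pow]
        exact pow_le_pow_left₀ (abs_nonneg _) (hpartial N ω) 2)
      (Eventually.of_forall fun ω => ((hsummable ω).hasSum.tendsto_sum_nat).pow 2)
  refine le_of_tendsto' hlim fun N => ?_
  rw [integral_sq_sum_of_iIndepFun (fun i => MemLp.of_bound (hW i).aestronglyMeasurable (a i)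
    (Eventually.of_forall (hWa i))) hind hmean]
  refine (Finset.sum_le_sum fun i _ => ?_).trans (ha2.sum_le_tsum _ fun i _ => sq_nonneg _)
  calc ∫ ω, W i ω ^ 2 ∂μ ≤ ∫ _, a i ^ 2 ∂μ := integral_mono_of_nonneg
        (Eventually.of_forall fun ω => sq_nonneg _) (integrable_const _)
        (Eventually.of_forall fun ω =>
          (sq_abs (W i ω)).symm.le.trans (pow_le_pow_left₀ (abs_nonneg _) (hWa i ω) 2))
    _ = a i ^ 2 := by simp

theorem integral_abs_tsum_mul_le_of_iIndepFun [IsProbabilityMeasure μ] {V : ℕ → Ω → ℝ}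
    (hV : ∀ i, Measurable (V i)) (hind : iIndepFun V μ) (hmean : ∀ i, ∫ ω, V i ω ∂μ = 0)
    {K : ℝ} (hVK : ∀ i ω, |V i ω| ≤ K) {c : ℕ → ℝ} (hc : Summable fun i => |c i|) {s : ℝ}
    (hs : 0 < s) (hcs : K ^ 2 * ∑' i, c i ^ 2 ≤ s ^ 2) :
    ∫ ω, |∑' i, c i * V i ω| ∂μ ≤ s := by
  have hbound : ∀ i ω, |c i * V i ω| ≤ |c i| * K := fun i ω => by
    rw [abs_mul]; exact mul_le_mul_of_nonneg_left (hVK i ω) (abs_nonneg _)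
  have hsum : Summable fun i => |c i| * K := hc.mul_right K
  refine integral_abs_le_of_integral_sq_le (MemLp.of_bound ?_ (∑' i, |c i| * K) ?_) hs ?_
  · exact aestronglyMeasurable_tsum (fun i => ((hV i).const_mul (c i)).aestronglyMeasurable)
      (Eventually.of_forall fun ω => .of_norm_bounded hsum fun i => hbound i ω)
  · exact Eventually.of_forall fun ω => tsum_of_norm_bounded hsum.hasSum fun i => hbound i ω
  calc ∫ ω, (∑' i, c i * V i ω) ^ 2 ∂μ ≤ ∑' i, (|c i| * K) ^ 2 :=
        integral_sq_tsum_le_of_iIndepFun (fun i => (hV i).const_mul (c i))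
          (hind.comp _ fun i => measurable_id.const_mul (c i))
          (fun i => by rw [integral_const_mul, hmean, mul_zero]) hbound hsum
    _ = K ^ 2 * ∑' i, c i ^ 2 := by simp_rw [mul_pow, sq_abs, tsum_mul_right, mul_comm]
    _ ≤ s ^ 2 := hcs

theorem integral_norm_mul_of_identDistrib {Y : ℕ → Ω → ℝ}
    (hY : ∀ i, IdentDistrib (Y i) (Y 0) μ μ) (c : ℕ → ℝ) (i : ℕ) :
    ∫ ω, ‖c i * Y i ω‖ ∂μ = |c i| * ∫ ω, |Y 0 ω| ∂μ := by
  simp_rw [norm_mul, integral_const_mul]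
  exact congrArg _ (hY i).norm.integral_eq

theorem summable_integral_norm_mul_of_identDistrib {Y : ℕ → Ω → ℝ}
    (hY : ∀ i, IdentDistrib (Y i) (Y 0) μ μ) {c : ℕ → ℝ} (hc : Summable fun i => |c i|) :
    Summable fun i => ∫ ω, ‖c i * Y i ω‖ ∂μ := by
  simpa only [integral_norm_mul_of_identDistrib hY] using hc.mul_right _

theorem ae_summable_mul_of_identDistrib {Y : ℕ → Ω → ℝ} (hY : ∀ i, IdentDistrib (Y i) (Y 0) μ μ)
    (hint : Integrable (Y 0) μ) {c : ℕ → ℝ} (hc : Summable fun i => |c i|) :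
    ∀ᵐ ω ∂μ, Summable fun i => c i * Y i ω :=
  (ae_summable_norm_of_summable_integral_norm
    (fun i => (((hY i).integrable_iff).2 hint).const_mul (c i))
    (summable_integral_norm_mul_of_identDistrib hY hc)).mono fun _ h => h.of_norm

theorem integrable_tsum_mul_of_identDistrib {Y : ℕ → Ω → ℝ}
    (hY : ∀ i, IdentDistrib (Y i) (Y 0) μ μ) (hint : Integrable (Y 0) μ) {c : ℕ → ℝ}
    (hc : Summable fun i => |c i|) : Integrable (fun ω => ∑' i, c i * Y i ω) μ :=
  integrable_tsum_of_summable_integral_norm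
    (fun i => (((hY i).integrable_iff).2 hint).const_mul (c i))
    (summable_integral_norm_mul_of_identDistrib hY hc)

theorem integral_abs_tsum_mul_le_of_identDistrib {Y : ℕ → Ω → ℝ}
    (hY : ∀ i, IdentDistrib (Y i) (Y 0) μ μ) (hint : Integrable (Y 0) μ) {c : ℕ → ℝ}
    (hc : Summable fun i => |c i|) :
    ∫ ω, |∑' i, c i * Y i ω| ∂μ ≤ (∑' i, |c i|) * ∫ ω, |Y 0 ω| ∂μ := by
  refine (integral_norm_tsum_le_tsum_integral_norm
    (fun i => (((hY i).integrable_iff).2 hint).const_mul (c i))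
    (summable_integral_norm_mul_of_identDistrib hY hc)).trans_eq ?_
  rw [tsum_congr (integral_norm_mul_of_identDistrib hY c), tsum_mul_right]

theorem exists_bounded_centered_approx [IsProbabilityMeasure μ] {g : Ω → ℝ} (hg : Integrable g μ)
    (hcent : ∫ ω, g ω ∂μ = 0) {δ : ℝ} (hδ : 0 < δ) :
    ∃ (v : ℝ → ℝ) (K : ℝ), Measurable v ∧ 0 < K ∧ (∀ x, |v x| ≤ K) ∧
      ∫ ω, v (g ω) ∂μ = 0 ∧ ∫ ω, |g ω - v (g ω)| ∂μ ≤ δ := by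
  obtain ⟨M, hε, hM⟩ : ∃ M : ℝ, ∫ ω, |g ω - truncation g M ω| ∂μ < δ / 2 ∧ 0 < M :=
    (((tendsto_integral_abs_sub_truncation hg).eventually (gt_mem_nhds (by positivity))).and
      (eventually_gt_atTop 0)).exists
  set m := ∫ ω, truncation g M ω ∂μ
  have htr : Integrable (truncation g M) μ := hg.1.integrable_truncation
  have hdiff : Integrable (fun ω => |g ω - truncation g M ω|) μ := (hg.sub htr).abs
  -- the recentring shift `m` is small because `g` is centred
  refine ⟨fun x => truncation id M x - m, |M| + |m|, (measurable_id.truncation M).sub_const m,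
    add_pos_of_pos_of_nonneg (abs_pos.2 hM.ne') (abs_nonneg m),
    fun x => (abs_sub _ _).trans (add_le_add (abs_truncation_le_bound _ _ _) le_rfl), ?_, ?_⟩
  · change ∫ ω, (truncation g M ω - m) ∂μ = 0
    rw [integral_sub htr (integrable_const m), integral_const, probReal_univ, one_smul, sub_self]
  calc ∫ ω, |g ω - (truncation g M ω - m)| ∂μ ≤ ∫ ω, (|g ω - truncation g M ω| + |m|) ∂μ :=
        integral_mono ((hg.sub (htr.sub (integrable_const m))).abs)
          (hdiff.add (integrable_const _)) fun ω => by
            rw [sub_sub_eq_add_sub, add_sub_right_comm]; exact abs_add_le _ _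
    _ = ∫ ω, |g ω - truncation g M ω| ∂μ + |m| := by
        rw [integral_add hdiff (integrable_const _), integral_const, probReal_univ, one_smul]
    _ ≤ δ := by linarith [abs_integral_truncation_le hg hcent M]

theorem integral_abs_tsum_mul_le_of_bounded_centered [IsProbabilityMeasure μ] {f : ℕ → Ω → ℝ}
    (hmeas : ∀ i, Measurable (f i)) (hindep : iIndepFun f μ)
    (hident : ∀ i, IdentDistrib (f i) (f 0) μ μ) (hint : Integrable (f 0) μ) {v : ℝ → ℝ}
    (hv : Measurable v) {K : ℝ} (hvK : ∀ x, |v x| ≤ K) (hvmean : ∫ ω, v (f 0 ω) ∂μ = 0)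
    {c : ℕ → ℝ} (hc : Summable fun i => |c i|) {s : ℝ} (hs : 0 < s)
    (hcs : K ^ 2 * ∑' i, c i ^ 2 ≤ s ^ 2) :
    ∫ ω, |∑' i, c i * f i ω| ∂μ ≤ s + (∑' i, |c i|) * ∫ ω, |f 0 ω - v (f 0 ω)| ∂μ := by
  set u : ℝ → ℝ := fun x => x - v x
  have hu : Measurable u := measurable_id.sub hv
  have hvint : Integrable (v ∘ f 0) μ :=
    .of_bound (hv.comp (hmeas 0)).aestronglyMeasurable K (ae_of_all _ fun ω => hvK _)
  have huint : Integrable (u ∘ f 0) μ := hint.sub hvint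
  have hsplit : ∀ᵐ ω ∂μ,
      ∑' i, c i * f i ω = ∑' i, c i * (v ∘ f i) ω + ∑' i, c i * (u ∘ f i) ω := by
    filter_upwards [ae_summable_mul_of_identDistrib (fun i => (hident i).comp hv) hvint hc,
      ae_summable_mul_of_identDistrib (fun i => (hident i).comp hu) huint hc] with ω hvω huω
    rw [← hvω.tsum_add huω]
    exact tsum_congr fun i => by simp only [Function.comp_apply, u]; ring
  have hv_bound : ∫ ω, |∑' i, c i * (v ∘ f i) ω| ∂μ ≤ s :=
    integral_abs_tsum_mul_le_of_iIndepFun (fun i => hv.comp (hmeas i))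
      (hindep.comp _ fun _ => hv) (fun i => ((hident i).comp hv).integral_eq.trans hvmean)
      (fun i ω => hvK _) hc hs hcs
  have hu_bound := integral_abs_tsum_mul_le_of_identDistrib (fun i => (hident i).comp hu) huint hc
  have hvint' := integrable_tsum_mul_of_identDistrib (fun i => (hident i).comp hv) hvint hc
  have huint' := integrable_tsum_mul_of_identDistrib (fun i => (hident i).comp hu) huint hc
  calc ∫ ω, |∑' i, c i * f i ω| ∂μ
      = ∫ ω, |∑' i, c i * (v ∘ f i) ω + ∑' i, c i * (u ∘ f i) ω| ∂μ :=
        integral_congr_ae (hsplit.mono fun ω h => congrArg abs h)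
    _ ≤ ∫ ω, (|∑' i, c i * (v ∘ f i) ω| + |∑' i, c i * (u ∘ f i) ω|) ∂μ :=
        integral_mono_of_nonneg (ae_of_all _ fun _ => abs_nonneg _) (hvint'.abs.add huint'.abs)
          (ae_of_all _ fun _ => abs_add_le _ _)
    _ = ∫ ω, |∑' i, c i * (v ∘ f i) ω| ∂μ + ∫ ω, |∑' i, c i * (u ∘ f i) ω| ∂μ :=
        integral_add hvint'.abs huint'.abs
    _ ≤ s + (∑' i, |c i|) * ∫ ω, |f 0 ω - v (f 0 ω)| ∂μ := add_le_add hv_bound hu_bound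

end

theorem tsum_sq_le_mul_tsum_abs {c : ℕ → ℝ} (hc : Summable fun i => |c i|) {b : ℝ}
    (hcb : ∀ i, |c i| ≤ b) : ∑' i, c i ^ 2 ≤ b * ∑' i, |c i| := by
  have hle : ∀ i, c i ^ 2 ≤ b * |c i| := fun i => by
    rw [← sq_abs, sq]; exact mul_le_mul_of_nonneg_right (hcb i) (abs_nonneg _)
  rw [← tsum_mul_left]
  exact Summable.tsum_le_tsum hle (.of_nonneg_of_le (fun i => sq_nonneg _) hle (hc.mul_left b))
    (hc.mul_left b)

/-- If `X₁, X₂, …` are i.i.d. copies of an integrable centered random variable, then for any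
`t > 0` there is `b > 0` such that for all constants `cᵢ` with `|cᵢ| ≤ b` and `Σᵢ |cᵢ| ≤ 1`,
one has `E|Σᵢ cᵢ Xᵢ| ≤ t`. -/
theorem stmt3 {Ω : Type*} [MeasurableSpace Ω] (P : Measure Ω) [IsProbabilityMeasure P]
    (f : ℕ → Ω → ℝ) (hmeas : ∀ i, Measurable (f i))
    (hindep : iIndepFun f P)
    (hid : ∀ i, P.map (f i) = P.map (f 0))
    (hint : Integrable (f 0) P) (hcent : ∫ ω, f 0 ω ∂P = 0)
    (t : ℝ) (ht : 0 < t) :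
    ∃ b : ℝ, 0 < b ∧ ∀ c : ℕ → ℝ, (∀ i, |c i| ≤ b) → Summable (fun i => |c i|) →
      (∑' i, |c i|) ≤ 1 → ∫ ω, |∑' i, c i * f i ω| ∂P ≤ t := by
  have hident : ∀ i, IdentDistrib (f i) (f 0) P P := fun i =>
    ⟨(hmeas i).aemeasurable, (hmeas 0).aemeasurable, hid i⟩
  obtain ⟨v, K, hv, hK, hvK, hvmean, hv_approx⟩ :=
    exists_bounded_centered_approx hint hcent (half_pos ht)
  refine ⟨(t / (2 * K)) ^ 2, by positivity, fun c hcb hcs hc1 => ?_⟩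
  have hc2 : K ^ 2 * ∑' i, c i ^ 2 ≤ (t / 2) ^ 2 :=
    calc K ^ 2 * ∑' i, c i ^ 2 ≤ K ^ 2 * ((t / (2 * K)) ^ 2 * 1) := by
          gcongr
          exact (tsum_sq_le_mul_tsum_abs hcs hcb).trans (by gcongr)
      _ = (t / 2) ^ 2 := by field_simp
  calc ∫ ω, |∑' i, c i * f i ω| ∂P
      ≤ t / 2 + (∑' i, |c i|) * ∫ ω, |f 0 ω - v (f 0 ω)| ∂P :=
        integral_abs_tsum_mul_le_of_bounded_centered hmeas hindep hident hint hv hvK hvmean hcs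
          (half_pos ht) hc2
    _ ≤ t / 2 + 1 * (t / 2) := by gcongr
    _ = t := by ring
end

section
/- Let {(a_{i,j})_{j≥1} : 1 ≤ i ≤ N₁} and {(b_{i,j})_{j≥1} : 1 ≤ i ≤ N₂} be two collections of sequences in [0,1] (N₁, N₂ ∈ ℕ ∪ {∞}) with a_{i,1}, b_{i,1} > 0 for all i, satisfying the condition that for each j and each ε > 0 only finitely many i have a_{i,j} > ε or b_{i,j} > ε, so that each collection can be arranged lexicographically descending in i. If for every ℓ ≥ 1 and all nonnegative integers p₁,…,p_ℓ with Σ p_j ≥ 1 one has Σᵢ a_{i,1} Π_{j=1}^ℓ a_{i,j}^{p_j} = Σᵢ b_{i,1} Π_{j=1}^ℓ b_{i,j}^{p_j} < ∞, then N₁ = N₂ and a_{i,j} = b_{i,j} for every i and j. -/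
set_option maxHeartbeats 1000000

open Finset
open scoped ENNReal

/-- `x` lexicographically dominates `y`: either they are equal, or `x` exceeds `y` at the
first index where they differ. -/
def LexDom (x y : ℕ → ℝ) : Prop :=
  x = y ∨ ∃ j, (∀ k, k < j → x k = y k) ∧ y j < x j

section Aux

private lemma prod_nonneg' {a : ℕ → ℕ → ℝ} (ha : ∀ i j, a i j ∈ Set.Icc (0:ℝ) 1)
    (i ℓ : ℕ) (q : ℕ → ℕ) : 0 ≤ ∏ k ∈ range ℓ, a i k ^ q k :=
  Finset.prod_nonneg fun k _ => pow_nonneg (ha i k).1 _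

private lemma prod_le_one' {a : ℕ → ℕ → ℝ} (ha : ∀ i j, a i j ∈ Set.Icc (0:ℝ) 1)
    (i ℓ : ℕ) (q : ℕ → ℕ) : ∏ k ∈ range ℓ, a i k ^ q k ≤ 1 :=
  Finset.prod_le_one (fun k _ => pow_nonneg (ha i k).1 _)
    (fun k _ => pow_le_one₀ (ha i k).1 (ha i k).2)

private lemma bdd' {a : ℕ → ℕ → ℝ} (ha : ∀ i j, a i j ∈ Set.Icc (0:ℝ) 1)
    (ℓ : ℕ) (q : ℕ → ℕ) : BddAbove (Set.range fun i => ∏ k ∈ range ℓ, a i k ^ q k) := by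
  refine ⟨1, ?_⟩
  rintro x ⟨i, rfl⟩
  exact prod_le_one' ha i ℓ q

private lemma F_le (a b : ℕ → ℕ → ℝ) (ℓ : ℕ)
    (ha01 : ∀ i j, a i j ∈ Set.Icc (0:ℝ) 1) (hb01 : ∀ i j, b i j ∈ Set.Icc (0:ℝ) 1)
    (hbz : ∀ i, b i 0 = 0 → ∀ j, b i j = 0)
    (hsum : ∀ p : ℕ → ℕ, 1 ≤ ∑ j ∈ range ℓ, p j →
      (∑' i, ENNReal.ofReal (b i 0 * ∏ j ∈ range ℓ, b i j ^ p j) =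
        ∑' i, ENNReal.ofReal (a i 0 * ∏ j ∈ range ℓ, a i j ^ p j)) ∧
      ∑' i, ENNReal.ofReal (a i 0 * ∏ j ∈ range ℓ, a i j ^ p j) ≠ ⊤)
    (q : ℕ → ℕ) (hq : 1 ≤ ∑ j ∈ range ℓ, q j) :
    (⨆ i, ∏ k ∈ range ℓ, b i k ^ q k) ≤ ⨆ i, ∏ k ∈ range ℓ, a i k ^ q k := by
  by_contra hcon
  push_neg at hcon
  obtain ⟨i₀, hi₀⟩ := exists_lt_of_lt_ciSup hcon
  set x : ℕ → ℝ := fun i => ∏ k ∈ range ℓ, a i k ^ q k with hxdef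
  set y : ℕ → ℝ := fun i => ∏ k ∈ range ℓ, b i k ^ q k with hydef
  set m : ℝ := ⨆ i, x i with hmdef
  have hm0 : 0 ≤ m := Real.iSup_nonneg fun i => prod_nonneg' ha01 i ℓ q
  have hy0 : 0 < y i₀ := lt_of_le_of_lt hm0 hi₀
  have hw : 0 < b i₀ 0 := by
    rcases (hb01 i₀ 0).1.lt_or_eq with h | h
    · exact h
    · exfalso
      obtain ⟨k, hk, hk1⟩ : ∃ k ∈ range ℓ, 1 ≤ q k := by
        by_contra hall
        push_neg at hall
        have h0 : ∑ j ∈ range ℓ, q j = 0 :=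
          Finset.sum_eq_zero fun j hj => by have := hall j hj; omega
        omega
      have hz : y i₀ = 0 := by
        refine Finset.prod_eq_zero hk ?_
        rw [hbz i₀ h.symm k]
        exact zero_pow (by omega)
      rw [hz] at hy0; exact lt_irrefl 0 hy0
  obtain ⟨-, hC⟩ := hsum q hq
  set C : ℝ≥0∞ := ∑' i, ENNReal.ofReal (a i 0 * x i) with hCdef
  have hCne : C ≠ ⊤ := hC
  have key : ∀ t : ℕ, b i₀ 0 * y i₀ ^ (t+1) ≤ m ^ t * C.toReal := by
    intro t
    obtain ⟨heq, hfin⟩ := hsum (fun k => q k * (t+1))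
      (le_trans hq (Finset.sum_le_sum fun j _ => Nat.le_mul_of_pos_right _ (by omega)))
    have hxp : ∀ i, ∏ k ∈ range ℓ, a i k ^ (q k * (t+1)) = x i ^ (t+1) := by
      intro i
      rw [hxdef]
      simp only
      rw [← Finset.prod_pow]
      exact Finset.prod_congr rfl fun k _ => pow_mul _ _ _
    have hyp : ∀ i, ∏ k ∈ range ℓ, b i k ^ (q k * (t+1)) = y i ^ (t+1) := by
      intro i
      rw [hydef]
      simp only
      rw [← Finset.prod_pow]
      exact Finset.prod_congr rfl fun k _ => pow_mul _ _ _
    simp only [hxp, hyp] at heq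
    have h1 : ENNReal.ofReal (b i₀ 0 * y i₀ ^ (t+1)) ≤
        ∑' i, ENNReal.ofReal (a i 0 * x i ^ (t+1)) := by
      rw [← heq]
      exact ENNReal.le_tsum i₀
    have h2 : (∑' i, ENNReal.ofReal (a i 0 * x i ^ (t+1))) ≤ ENNReal.ofReal (m ^ t) * C := by
      rw [hCdef, ← ENNReal.tsum_mul_left]
      refine ENNReal.tsum_le_tsum fun i => ?_
      rw [← ENNReal.ofReal_mul (pow_nonneg hm0 t)]
      refine ENNReal.ofReal_le_ofReal ?_
      have hxm : x i ≤ m := le_ciSup (bdd' ha01 ℓ q) i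
      have hx0 : 0 ≤ x i := prod_nonneg' ha01 i ℓ q
      have ha0 : 0 ≤ a i 0 := (ha01 i 0).1
      have hxt : x i ^ (t+1) ≤ m ^ t * x i := by
        rw [pow_succ]
        exact mul_le_mul_of_nonneg_right (pow_le_pow_left₀ hx0 hxm t) hx0
      calc a i 0 * x i ^ (t+1) ≤ a i 0 * (m ^ t * x i) := by
            exact mul_le_mul_of_nonneg_left hxt ha0
        _ = m ^ t * (a i 0 * x i) := by ring
    have h3 : ENNReal.ofReal (b i₀ 0 * y i₀ ^ (t+1)) ≤ ENNReal.ofReal (m ^ t * C.toReal) := by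
      rw [ENNReal.ofReal_mul (pow_nonneg hm0 t), ENNReal.ofReal_toReal hCne]
      exact le_trans h1 h2
    exact (ENNReal.ofReal_le_ofReal_iff
      (mul_nonneg (pow_nonneg hm0 t) ENNReal.toReal_nonneg)).mp h3
  rcases hm0.lt_or_eq with hmpos | hmzero
  · obtain ⟨t, ht⟩ := pow_unbounded_of_one_lt (C.toReal / (b i₀ 0 * y i₀))
      ((one_lt_div hmpos).2 hi₀)
    have hkey := key t
    have h4 : (y i₀ / m) ^ t ≤ C.toReal / (b i₀ 0 * y i₀) := by
      rw [div_pow, div_le_div_iff₀ (pow_pos hmpos t) (mul_pos hw hy0)]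
      calc y i₀ ^ t * (b i₀ 0 * y i₀) = b i₀ 0 * y i₀ ^ (t+1) := by ring
        _ ≤ m ^ t * C.toReal := hkey
        _ = C.toReal * m ^ t := by ring
    exact absurd h4 (not_le.mpr ht)
  · have h1 := key 1
    rw [← hmzero] at h1
    have : (0:ℝ) < b i₀ 0 * y i₀ ^ (1+1) := by positivity
    nlinarith


private lemma sup_extract (a : ℕ → ℕ → ℝ)
    (ha01 : ∀ i j, a i j ∈ Set.Icc (0:ℝ) 1)
    (hafin : ∀ j : ℕ, ∀ ε : ℝ, 0 < ε → {i : ℕ | ε < a i j}.Finite)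
    (hadesc : ∀ i i' : ℕ, i ≤ i' → LexDom (a i) (a i'))
    (ℓ : ℕ) (β : ℝ) (hβ : a 0 ℓ < β) :
    ∃ q : ℕ → ℕ, q ℓ = 1 ∧ 1 ≤ ∑ k ∈ range (ℓ+1), q k ∧
      (⨆ i, ∏ k ∈ range (ℓ+1), a i k ^ q k) < (∏ k ∈ range ℓ, a 0 k ^ q k) * β := by
  classical
  have hβ0 : 0 < β := lt_of_le_of_lt (ha01 0 ℓ).1 hβ
  set S : Finset ℕ := (range ℓ).filter (fun k => 0 < a 0 k) with hS
  -- choose per-coordinate strict upper bounds c j for smaller entries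
  have hc : ∀ j ∈ S, ∃ c : ℝ, 0 < c ∧ c < a 0 j ∧ ∀ i, a i j < a 0 j → a i j ≤ c := by
    intro j hj
    have hv : 0 < a 0 j := (Finset.mem_filter.mp hj).2
    have hfin2 : {i : ℕ | a 0 j / 2 < a i j}.Finite := hafin j (a 0 j / 2) (by linarith)
    set Fj : Finset ℕ := hfin2.toFinset.filter (fun i => a i j < a 0 j) with hFj
    by_cases hne : Fj.Nonempty
    · refine ⟨max (a 0 j / 2) (Fj.sup' hne (fun i => a i j)),
        lt_max_of_lt_left (by linarith), ?_, ?_⟩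
      · refine max_lt (by linarith) ((Finset.sup'_lt_iff hne).2 fun i hi => ?_)
        exact (Finset.mem_filter.mp hi).2
      · intro i hi
        rcases le_or_gt (a i j) (a 0 j / 2) with h | h
        · exact le_max_of_le_left h
        · refine le_max_of_le_right (Finset.le_sup' (fun i => a i j) ?_)
          exact Finset.mem_filter.mpr ⟨hfin2.mem_toFinset.mpr h, hi⟩
    · refine ⟨a 0 j / 2, by linarith, by linarith, fun i hi => ?_⟩
      by_contra h
      push_neg at h
      exact hne ⟨i, Finset.mem_filter.mpr ⟨hfin2.mem_toFinset.mpr h, hi⟩⟩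
  choose! c hcpos hclt hcbound using hc
  -- μ : a uniform positive lower bound for entries of a 0 in S
  set μ : ℝ := if h : S.Nonempty then S.inf' h (fun k => a 0 k) else 1 with hμ
  have hμpos : 0 < μ := by
    rw [hμ]
    split_ifs with h
    · exact (Finset.lt_inf'_iff h).2 fun b hb => (Finset.mem_filter.mp hb).2
    · exact one_pos
  have hμle1 : μ ≤ 1 := by
    rw [hμ]
    split_ifs with h
    · obtain ⟨k, hk⟩ := h
      exact le_trans (Finset.inf'_le _ hk) (ha01 0 k).2
    · exact le_refl 1
  have hμle : ∀ k ∈ S, μ ≤ a 0 k := by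
    intro k hk
    rw [hμ, dif_pos ⟨k, hk⟩]
    exact Finset.inf'_le _ hk
  set Y : ℝ := 1 + 1/β with hY
  have hYpos : 0 < Y := by
    have := one_div_pos.mpr hβ0
    rw [hY]; linarith
  have hY1 : 1 < Y := by
    have := one_div_pos.mpr hβ0
    rw [hY]; linarith
  set M : ℝ := (1/μ)^ℓ * Y with hM
  have hr : ∀ j ∈ S, 1 < a 0 j / c j := fun j hj => (one_lt_div (hcpos j hj)).2 (hclt j hj)
  obtain ⟨T, hT1, hTM⟩ : ∃ T : ℕ, 1 ≤ T ∧ ∀ j ∈ S, M < (a 0 j / c j) ^ T := by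
    have hex : ∀ j ∈ S, ∃ t : ℕ, M < (a 0 j / c j) ^ t :=
      fun j hj => pow_unbounded_of_one_lt M (hr j hj)
    choose! t ht using hex
    refine ⟨max 1 (S.sup t), le_max_left _ _, fun j hj => ?_⟩
    calc M < (a 0 j / c j) ^ t j := ht j hj
      _ ≤ (a 0 j / c j) ^ (max 1 (S.sup t)) :=
        pow_le_pow_right₀ (le_of_lt (hr j hj))
          (le_trans (Finset.le_sup hj) (le_max_right _ _))
  set q : ℕ → ℕ := fun k => if k = ℓ then 1 else if k ∈ S then T^(ℓ - k) else 0 with hqdef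
  have hqℓ : q ℓ = 1 := by simp [hqdef]
  have hqS : ∀ k ∈ S, q k = T^(ℓ-k) := by
    intro k hk
    have hkl : k < ℓ := Finset.mem_range.mp (Finset.mem_filter.mp hk).1
    simp [hqdef, Nat.ne_of_lt hkl, hk]
  have hq0 : ∀ k, k < ℓ → k ∉ S → q k = 0 := by
    intro k hk hks
    simp [hqdef, Nat.ne_of_lt hk, hks]
  have hPpos : ∀ s : Finset ℕ, (∀ k ∈ s, k < ℓ) → (0:ℝ) < ∏ k ∈ s, a 0 k ^ q k := by
    intro s hs
    refine Finset.prod_pos fun k hk => ?_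
    by_cases hks : k ∈ S
    · exact pow_pos (Finset.mem_filter.mp hks).2 _
    · rw [hq0 k (hs k hk) hks, pow_zero]; exact one_pos
  set P : ℝ := ∏ k ∈ range ℓ, a 0 k ^ q k with hPdef
  have hP : 0 < P := hPpos _ (fun k hk => Finset.mem_range.mp hk)
  set g : ℕ → ℝ := fun j => (∏ k ∈ range j, a 0 k ^ q k) * c j ^ (T^(ℓ - j)) with hg
  -- key estimate for each class j ∈ S
  have hgP : ∀ j ∈ S, g j < P * β := by
    intro j hj
    have hjℓ : j < ℓ := Finset.mem_range.mp (Finset.mem_filter.mp hj).1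
    have hvj : 0 < a 0 j := (Finset.mem_filter.mp hj).2
    have hcj : 0 < c j := hcpos j hj
    set m' : ℕ := ℓ - (j+1) with hm'
    have hℓj : ℓ - j = m' + 1 := by omega
    set Q : ℝ := ∏ k ∈ Finset.Ico (j+1) ℓ, a 0 k ^ q k with hQ
    have hQpos : 0 < Q := hPpos _ (fun k hk => (Finset.mem_Ico.mp hk).2)
    have hQge : (μ ^ ℓ) ^ (T ^ m') ≤ Q := by
      have hbound : ∀ k ∈ Finset.Ico (j+1) ℓ, μ ^ (T ^ m') ≤ a 0 k ^ q k := by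
        intro k hk
        obtain ⟨hk1, hk2⟩ := Finset.mem_Ico.mp hk
        by_cases hks : k ∈ S
        · have h1 : q k = T ^ (ℓ - k) := hqS k hks
          have h2 : T ^ (ℓ - k) ≤ T ^ m' := Nat.pow_le_pow_right hT1 (by omega)
          calc μ ^ (T ^ m') ≤ μ ^ (T ^ (ℓ - k)) :=
              pow_le_pow_of_le_one (le_of_lt hμpos) hμle1 h2
            _ ≤ (a 0 k) ^ (T ^ (ℓ - k)) := pow_le_pow_left₀ (le_of_lt hμpos) (hμle k hks) _
            _ = a 0 k ^ q k := by rw [h1]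
        · rw [hq0 k hk2 hks, pow_zero]
          exact pow_le_one₀ (le_of_lt hμpos) hμle1
      have hcard : (Finset.Ico (j+1) ℓ).card = m' := by
        rw [Nat.card_Ico]
      calc (μ ^ ℓ) ^ (T ^ m') = (μ ^ (T ^ m')) ^ ℓ := by ring
        _ ≤ (μ ^ (T ^ m')) ^ m' := pow_le_pow_of_le_one
            (pow_nonneg (le_of_lt hμpos) _)
            (pow_le_one₀ (le_of_lt hμpos) hμle1) (show m' ≤ ℓ by omega)
        _ = ∏ _k ∈ Finset.Ico (j+1) ℓ, μ ^ (T ^ m') := by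
            rw [Finset.prod_const, hcard]
        _ ≤ Q := Finset.prod_le_prod (fun _ _ => pow_nonneg (le_of_lt hμpos) _) hbound
    have hkeyj : c j ^ (T ^ (ℓ - j)) < a 0 j ^ (T ^ (ℓ - j)) * (Q * β) := by
      have hs1 : (c j / a 0 j) ^ T < μ ^ ℓ / Y := by
        have hMeq : M = Y / μ ^ ℓ := by
          rw [hM, div_pow, one_pow]; ring
        have h2 : Y / μ ^ ℓ < (a 0 j / c j) ^ T := hMeq ▸ hTM j hj
        have hcv : (c j / a 0 j) ^ T = ((a 0 j / c j) ^ T)⁻¹ := by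
          rw [← inv_pow, inv_div]
        rw [hcv, show μ ^ ℓ / Y = (Y / μ ^ ℓ)⁻¹ by rw [inv_div]]
        exact inv_strictAnti₀ (div_pos hYpos (pow_pos hμpos ℓ)) h2
      have hs1' : (0:ℝ) ≤ (c j / a 0 j) ^ T := pow_nonneg (div_nonneg hcj.le hvj.le) T
      have hchain : (c j / a 0 j) ^ (T ^ (ℓ - j)) < Q * β := by
        have e1 : (c j / a 0 j) ^ (T ^ (ℓ - j)) = ((c j / a 0 j) ^ T) ^ (T ^ m') := by
          rw [← pow_mul, hℓj, pow_succ, Nat.mul_comm]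
        rw [e1]
        have hYβ : β * Y = β + 1 := by
          rw [hY]; field_simp
        calc ((c j / a 0 j) ^ T) ^ (T ^ m') ≤ (μ ^ ℓ / Y) ^ (T ^ m') :=
            pow_le_pow_left₀ hs1' hs1.le _
          _ = (μ ^ ℓ) ^ (T ^ m') / Y ^ (T ^ m') := div_pow _ _ _
          _ ≤ (μ ^ ℓ) ^ (T ^ m') / Y := by
              have hTm0 : T ^ m' ≠ 0 := by
                have := Nat.one_le_pow m' T (by omega)
                omega
              exact div_le_div_of_nonneg_left (pow_nonneg (pow_nonneg hμpos.le ℓ) _) hYpos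
                (le_self_pow₀ hY1.le hTm0)

          _ ≤ Q / Y := by gcongr
          _ < Q * β := by
              rw [div_lt_iff₀ hYpos]
              nlinarith [hQpos]
      have hmulpow : a 0 j ^ (T^(ℓ-j)) * ((c j / a 0 j) ^ (T ^ (ℓ - j))) = c j ^ (T^(ℓ-j)) := by
        rw [← mul_pow]
        congr 1
        field_simp
      calc c j ^ (T^(ℓ-j)) = a 0 j ^ (T^(ℓ-j)) * ((c j / a 0 j) ^ (T ^ (ℓ - j))) := hmulpow.symm
        _ < a 0 j ^ (T^(ℓ-j)) * (Q * β) :=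
            mul_lt_mul_of_pos_left hchain (pow_pos hvj _)
    have hPsplit : P = (∏ k ∈ range j, a 0 k ^ q k) * (a 0 j ^ (T^(ℓ-j)) * Q) := by
      rw [hPdef, Finset.range_eq_Ico,
        ← Finset.prod_Ico_consecutive _ (Nat.zero_le j) (le_of_lt hjℓ),
        ← Finset.range_eq_Ico]
      congr 1
      rw [← Finset.prod_Ico_consecutive _ (by omega : j ≤ j+1) (by omega : j+1 ≤ ℓ)]
      congr 1
      rw [Nat.Ico_succ_singleton j, Finset.prod_singleton, hqS j hj]
    have hPj : 0 < ∏ k ∈ range j, a 0 k ^ q k := by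
      refine hPpos _ (fun k hk => ?_)
      have := Finset.mem_range.mp hk
      omega
    rw [hg]
    simp only
    rw [hPsplit]
    calc (∏ k ∈ range j, a 0 k ^ q k) * c j ^ (T^(ℓ-j))
        < (∏ k ∈ range j, a 0 k ^ q k) * (a 0 j ^ (T^(ℓ-j)) * (Q * β)) :=
          mul_lt_mul_of_pos_left hkeyj hPj
      _ = ((∏ k ∈ range j, a 0 k ^ q k) * (a 0 j ^ (T^(ℓ-j)) * Q)) * β := by ring
  -- the uniform upper bound E
  set E : ℝ := max (P * a 0 ℓ) (if h : S.Nonempty then S.sup' h g else P * a 0 ℓ) with hE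
  have hElt : E < P * β := by
    rw [hE]
    refine max_lt (mul_lt_mul_of_pos_left hβ hP) ?_
    split_ifs with h
    · exact (Finset.sup'_lt_iff h).2 hgP
    · exact mul_lt_mul_of_pos_left hβ hP
  have hrow : ∀ i, (∏ k ∈ range (ℓ+1), a i k ^ q k) ≤ E := by
    intro i
    rcases hadesc 0 i (Nat.zero_le i) with heqr | ⟨j, hpre, hlt⟩
    · have hak : ∀ k, a i k = a 0 k := fun k => by rw [← heqr]
      have hxx : ∏ k ∈ range (ℓ+1), a i k ^ q k = P * a 0 ℓ := by
        rw [Finset.prod_range_succ, hqℓ, pow_one, hak ℓ, hPdef]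
        congr 1
        exact Finset.prod_congr rfl fun k _ => by rw [hak k]
      rw [hxx]
      exact le_max_left _ _
    · by_cases hjl : ℓ ≤ j
      · have hpref : ∀ k, k < ℓ → a i k = a 0 k := fun k hk => (hpre k (by omega)).symm
        have haiℓ : a i ℓ ≤ a 0 ℓ := by
          rcases eq_or_lt_of_le hjl with h | h
          · rw [← h] at hlt
            exact le_of_lt hlt
          · exact le_of_eq (hpre ℓ h).symm
        have hxx : ∏ k ∈ range (ℓ+1), a i k ^ q k = P * a i ℓ := by
          rw [Finset.prod_range_succ, hqℓ, pow_one, hPdef]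
          congr 1
          exact Finset.prod_congr rfl fun k hk => by
            rw [hpref k (Finset.mem_range.mp hk)]
        rw [hxx]
        exact le_trans (mul_le_mul_of_nonneg_left haiℓ (le_of_lt hP)) (le_max_left _ _)
      · push_neg at hjl
        have hvj0 : 0 < a 0 j := lt_of_le_of_lt (ha01 i j).1 hlt
        have hjS : j ∈ S := Finset.mem_filter.mpr ⟨Finset.mem_range.mpr hjl, hvj0⟩
        have hsplit : ∏ k ∈ range (ℓ+1), a i k ^ q k =
            (∏ k ∈ range (j+1), a i k ^ q k) * ∏ k ∈ Finset.Ico (j+1) (ℓ+1), a i k ^ q k := by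
          rw [Finset.range_eq_Ico,
            ← Finset.prod_Ico_consecutive _ (Nat.zero_le (j+1)) (by omega : j+1 ≤ ℓ+1),
            ← Finset.range_eq_Ico]
        have h2le : ∏ k ∈ Finset.Ico (j+1) (ℓ+1), a i k ^ q k ≤ 1 :=
          Finset.prod_le_one (fun k _ => pow_nonneg (ha01 i k).1 _)
            (fun k _ => pow_le_one₀ (ha01 i k).1 (ha01 i k).2)
        have h1eq : ∏ k ∈ range (j+1), a i k ^ q k =
            (∏ k ∈ range j, a 0 k ^ q k) * a i j ^ (T ^ (ℓ - j)) := by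
          rw [Finset.prod_range_succ, hqS j hjS]
          congr 1
          exact Finset.prod_congr rfl fun k hk => by
            rw [← hpre k (Finset.mem_range.mp hk)]
        have hPj0 : (0:ℝ) ≤ ∏ k ∈ range j, a 0 k ^ q k := by
          refine le_of_lt (hPpos _ fun k hk => ?_)
          have := Finset.mem_range.mp hk
          omega
        have hgj : ∏ k ∈ range (ℓ+1), a i k ^ q k ≤ g j := by
          rw [hsplit, h1eq]
          have hfac0 : (0:ℝ) ≤ (∏ k ∈ range j, a 0 k ^ q k) * a i j ^ (T^(ℓ-j)) :=
            mul_nonneg hPj0 (pow_nonneg (ha01 i j).1 _)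
          have hb1 : a i j ^ (T ^ (ℓ - j)) ≤ c j ^ (T ^ (ℓ - j)) :=
            pow_le_pow_left₀ (ha01 i j).1 (hcbound j hjS i hlt) _
          calc ((∏ k ∈ range j, a 0 k ^ q k) * a i j ^ (T^(ℓ-j))) *
                (∏ k ∈ Finset.Ico (j+1) (ℓ+1), a i k ^ q k)
              ≤ ((∏ k ∈ range j, a 0 k ^ q k) * a i j ^ (T^(ℓ-j))) * 1 :=
                mul_le_mul_of_nonneg_left h2le hfac0
            _ = (∏ k ∈ range j, a 0 k ^ q k) * a i j ^ (T^(ℓ-j)) := mul_one _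
            _ ≤ (∏ k ∈ range j, a 0 k ^ q k) * c j ^ (T^(ℓ-j)) :=
                mul_le_mul_of_nonneg_left hb1 hPj0
            _ = g j := rfl
        have hgE : g j ≤ E := by
          rw [hE]
          refine le_max_of_le_right ?_
          rw [dif_pos ⟨j, hjS⟩]
          exact Finset.le_sup' g hjS
        exact le_trans hgj hgE
  refine ⟨q, hqℓ, ?_, ?_⟩
  · calc (1:ℕ) = q ℓ := hqℓ.symm
      _ ≤ ∑ k ∈ range (ℓ+1), q k :=
        Finset.single_le_sum (fun k _ => Nat.zero_le _) (Finset.self_mem_range_succ ℓ)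
  · calc (⨆ i, ∏ k ∈ range (ℓ+1), a i k ^ q k) ≤ E := ciSup_le hrow
      _ < P * β := hElt


private lemma Feq (a b : ℕ → ℕ → ℝ)
    (ha01 : ∀ i j, a i j ∈ Set.Icc (0:ℝ) 1) (hb01 : ∀ i j, b i j ∈ Set.Icc (0:ℝ) 1)
    (haz : ∀ i, a i 0 = 0 → ∀ j, a i j = 0) (hbz : ∀ i, b i 0 = 0 → ∀ j, b i j = 0)
    (hsum : ∀ ℓ : ℕ, 1 ≤ ℓ → ∀ p : ℕ → ℕ, 1 ≤ ∑ j ∈ Finset.range ℓ, p j →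
      (∑' i, ENNReal.ofReal (a i 0 * ∏ j ∈ Finset.range ℓ, a i j ^ p j) =
        ∑' i, ENNReal.ofReal (b i 0 * ∏ j ∈ Finset.range ℓ, b i j ^ p j)) ∧
      ∑' i, ENNReal.ofReal (a i 0 * ∏ j ∈ Finset.range ℓ, a i j ^ p j) ≠ ⊤)
    (ℓ : ℕ) (hℓ : 1 ≤ ℓ) (q : ℕ → ℕ) (hq : 1 ≤ ∑ j ∈ range ℓ, q j) :
    (⨆ i, ∏ k ∈ range ℓ, a i k ^ q k) = ⨆ i, ∏ k ∈ range ℓ, b i k ^ q k := by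
  refine le_antisymm ?_ ?_
  · refine F_le b a ℓ hb01 ha01 haz (fun p hp => ?_) q hq
    obtain ⟨heq, hfin⟩ := hsum ℓ hℓ p hp
    exact ⟨heq, heq ▸ hfin⟩
  · refine F_le a b ℓ ha01 hb01 hbz (fun p hp => ?_) q hq
    obtain ⟨heq, hfin⟩ := hsum ℓ hℓ p hp
    exact ⟨heq.symm, hfin⟩

private lemma row0_eq (a b : ℕ → ℕ → ℝ)
    (ha01 : ∀ i j, a i j ∈ Set.Icc (0:ℝ) 1) (hb01 : ∀ i j, b i j ∈ Set.Icc (0:ℝ) 1)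
    (haz : ∀ i, a i 0 = 0 → ∀ j, a i j = 0) (hbz : ∀ i, b i 0 = 0 → ∀ j, b i j = 0)
    (hafin : ∀ j : ℕ, ∀ ε : ℝ, 0 < ε → {i : ℕ | ε < a i j}.Finite)
    (hbfin : ∀ j : ℕ, ∀ ε : ℝ, 0 < ε → {i : ℕ | ε < b i j}.Finite)
    (hadesc : ∀ i i' : ℕ, i ≤ i' → LexDom (a i) (a i'))
    (hbdesc : ∀ i i' : ℕ, i ≤ i' → LexDom (b i) (b i'))
    (hsum : ∀ ℓ : ℕ, 1 ≤ ℓ → ∀ p : ℕ → ℕ, 1 ≤ ∑ j ∈ Finset.range ℓ, p j →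
      (∑' i, ENNReal.ofReal (a i 0 * ∏ j ∈ Finset.range ℓ, a i j ^ p j) =
        ∑' i, ENNReal.ofReal (b i 0 * ∏ j ∈ Finset.range ℓ, b i j ^ p j)) ∧
      ∑' i, ENNReal.ofReal (a i 0 * ∏ j ∈ Finset.range ℓ, a i j ^ p j) ≠ ⊤) :
    ∀ j, a 0 j = b 0 j := by
  intro j
  induction j using Nat.strong_induction_on with
  | _ ℓ IH =>
  rcases lt_trichotomy (a 0 ℓ) (b 0 ℓ) with h | h | h
  · exfalso
    obtain ⟨q, hqℓ, hq1, hqlt⟩ := sup_extract a ha01 hafin hadesc ℓ (b 0 ℓ) h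
    have hFeq := Feq a b ha01 hb01 haz hbz hsum (ℓ+1) (by omega) q hq1
    have hyb : (∏ k ∈ range (ℓ+1), b 0 k ^ q k) ≤ ⨆ i, ∏ k ∈ range (ℓ+1), b i k ^ q k :=
      le_ciSup (bdd' hb01 (ℓ+1) q) 0
    have heqP : (∏ k ∈ range ℓ, a 0 k ^ q k) * b 0 ℓ = ∏ k ∈ range (ℓ+1), b 0 k ^ q k := by
      rw [Finset.prod_range_succ, hqℓ, pow_one]
      congr 1
      exact Finset.prod_congr rfl fun k hk => by rw [IH k (Finset.mem_range.mp hk)]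
    rw [hFeq, heqP] at hqlt
    exact absurd hyb (not_le.mpr hqlt)
  · exact h
  · exfalso
    obtain ⟨q, hqℓ, hq1, hqlt⟩ := sup_extract b hb01 hbfin hbdesc ℓ (a 0 ℓ) h
    have hFeq := Feq a b ha01 hb01 haz hbz hsum (ℓ+1) (by omega) q hq1
    have hya : (∏ k ∈ range (ℓ+1), a 0 k ^ q k) ≤ ⨆ i, ∏ k ∈ range (ℓ+1), a i k ^ q k :=
      le_ciSup (bdd' ha01 (ℓ+1) q) 0
    have heqP : (∏ k ∈ range ℓ, b 0 k ^ q k) * a 0 ℓ = ∏ k ∈ range (ℓ+1), a 0 k ^ q k := by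
      rw [Finset.prod_range_succ, hqℓ, pow_one]
      congr 1
      exact Finset.prod_congr rfl fun k hk => by rw [IH k (Finset.mem_range.mp hk)]
    rw [← hFeq, heqP] at hqlt
    exact absurd hya (not_le.mpr hqlt)

private lemma all_eq : ∀ (i : ℕ) (a b : ℕ → ℕ → ℝ),
    (∀ i j, a i j ∈ Set.Icc (0:ℝ) 1) → (∀ i j, b i j ∈ Set.Icc (0:ℝ) 1) →
    (∀ i, a i 0 = 0 → ∀ j, a i j = 0) → (∀ i, b i 0 = 0 → ∀ j, b i j = 0) →
    (∀ j : ℕ, ∀ ε : ℝ, 0 < ε → {i : ℕ | ε < a i j}.Finite) →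
    (∀ j : ℕ, ∀ ε : ℝ, 0 < ε → {i : ℕ | ε < b i j}.Finite) →
    (∀ i i' : ℕ, i ≤ i' → LexDom (a i) (a i')) →
    (∀ i i' : ℕ, i ≤ i' → LexDom (b i) (b i')) →
    (∀ ℓ : ℕ, 1 ≤ ℓ → ∀ p : ℕ → ℕ, 1 ≤ ∑ j ∈ Finset.range ℓ, p j →
      (∑' i, ENNReal.ofReal (a i 0 * ∏ j ∈ Finset.range ℓ, a i j ^ p j) =
        ∑' i, ENNReal.ofReal (b i 0 * ∏ j ∈ Finset.range ℓ, b i j ^ p j)) ∧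
      ∑' i, ENNReal.ofReal (a i 0 * ∏ j ∈ Finset.range ℓ, a i j ^ p j) ≠ ⊤) →
    ∀ j, a i j = b i j := by
  intro i
  induction i with
  | zero =>
    intro a b ha01 hb01 haz hbz hafin hbfin hadesc hbdesc hsum
    exact row0_eq a b ha01 hb01 haz hbz hafin hbfin hadesc hbdesc hsum
  | succ n IH =>
    intro a b ha01 hb01 haz hbz hafin hbfin hadesc hbdesc hsum
    have h0 := row0_eq a b ha01 hb01 haz hbz hafin hbfin hadesc hbdesc hsum
    have hsum' : ∀ ℓ : ℕ, 1 ≤ ℓ → ∀ p : ℕ → ℕ, 1 ≤ ∑ j ∈ Finset.range ℓ, p j →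
        ((∑' i, ENNReal.ofReal (a (i+1) 0 * ∏ j ∈ Finset.range ℓ, a (i+1) j ^ p j)) =
          ∑' i, ENNReal.ofReal (b (i+1) 0 * ∏ j ∈ Finset.range ℓ, b (i+1) j ^ p j)) ∧
        (∑' i, ENNReal.ofReal (a (i+1) 0 * ∏ j ∈ Finset.range ℓ, a (i+1) j ^ p j)) ≠ ⊤ := by
      intro ℓ hℓ p hp
      obtain ⟨heq, hfin⟩ := hsum ℓ hℓ p hp
      have ea := tsum_eq_zero_add'
        (f := fun i => ENNReal.ofReal (a i 0 * ∏ j ∈ Finset.range ℓ, a i j ^ p j))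
        ENNReal.summable
      have eb := tsum_eq_zero_add'
        (f := fun i => ENNReal.ofReal (b i 0 * ∏ j ∈ Finset.range ℓ, b i j ^ p j))
        ENNReal.summable
      have hterm : ENNReal.ofReal (a 0 0 * ∏ j ∈ Finset.range ℓ, a 0 j ^ p j) =
          ENNReal.ofReal (b 0 0 * ∏ j ∈ Finset.range ℓ, b 0 j ^ p j) := by
        simp only [h0]
      constructor
      · have h := heq
        rw [ea, eb, hterm] at h
        exact (ENNReal.add_right_inj ENNReal.ofReal_ne_top).mp h
      · intro htop
        apply hfin
        rw [ea, htop, add_top]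
    exact IH (fun i => a (i+1)) (fun i => b (i+1))
      (fun i j => ha01 (i+1) j) (fun i j => hb01 (i+1) j)
      (fun i h j => haz (i+1) h j) (fun i h j => hbz (i+1) h j)
      (fun j ε hε => Set.Finite.preimage (f := fun i : ℕ => i + 1)
        (fun x _ y _ h => by simp only [] at h; omega) (hafin j ε hε))
      (fun j ε hε => Set.Finite.preimage (f := fun i : ℕ => i + 1)
        (fun x _ y _ h => by simp only [] at h; omega) (hbfin j ε hε))
      (fun i i' h => hadesc (i+1) (i'+1) (by omega))
      (fun i i' h => hbdesc (i+1) (i'+1) (by omega))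
      hsum'

end Aux

/-- Two collections of `[0,1]`-valued sequences, indexed by `i < N₁` resp. `i < N₂`
(`N₁, N₂ ∈ ℕ ∪ {∞}`, with zero-padding beyond the index range), with positive first terms,
satisfying the finiteness condition that for each `j` and `ε > 0` only finitely many `i` have
`a i j > ε`, and arranged lexicographically descending in `i`.  If all the "moment sums"
`Σᵢ a_{i,1} Π_{j=1}^ℓ a_{i,j}^{p_j}` agree (and are finite) for every `ℓ ≥ 1` and nonnegative
exponents with `Σ p_j ≥ 1`, then `N₁ = N₂` and the collections coincide. -/
theorem stmt7 (N₁ N₂ : ℕ∞) (a b : ℕ → ℕ → ℝ)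
    (ha01 : ∀ i j, a i j ∈ Set.Icc (0 : ℝ) 1) (hb01 : ∀ i j, b i j ∈ Set.Icc (0 : ℝ) 1)
    (haN : ∀ i : ℕ, ((i : ℕ∞) < N₁ ↔ 0 < a i 0) ∧ (¬ (i : ℕ∞) < N₁ → ∀ j, a i j = 0))
    (hbN : ∀ i : ℕ, ((i : ℕ∞) < N₂ ↔ 0 < b i 0) ∧ (¬ (i : ℕ∞) < N₂ → ∀ j, b i j = 0))
    (hafin : ∀ j : ℕ, ∀ ε : ℝ, 0 < ε → {i : ℕ | ε < a i j}.Finite)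
    (hbfin : ∀ j : ℕ, ∀ ε : ℝ, 0 < ε → {i : ℕ | ε < b i j}.Finite)
    (hadesc : ∀ i i' : ℕ, i ≤ i' → LexDom (a i) (a i'))
    (hbdesc : ∀ i i' : ℕ, i ≤ i' → LexDom (b i) (b i'))
    (hsum : ∀ ℓ : ℕ, 1 ≤ ℓ → ∀ p : ℕ → ℕ, 1 ≤ ∑ j ∈ Finset.range ℓ, p j →
      (∑' i, ENNReal.ofReal (a i 0 * ∏ j ∈ Finset.range ℓ, a i j ^ p j) =
        ∑' i, ENNReal.ofReal (b i 0 * ∏ j ∈ Finset.range ℓ, b i j ^ p j)) ∧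
      ∑' i, ENNReal.ofReal (a i 0 * ∏ j ∈ Finset.range ℓ, a i j ^ p j) ≠ ⊤) :
    N₁ = N₂ ∧ ∀ i j, a i j = b i j := by
  have haz : ∀ i, a i 0 = 0 → ∀ j, a i j = 0 := by
    intro i h j
    refine (haN i).2 (fun hlt => ?_) j
    have := (haN i).1.mp hlt
    linarith
  have hbz : ∀ i, b i 0 = 0 → ∀ j, b i j = 0 := by
    intro i h j
    refine (hbN i).2 (fun hlt => ?_) j
    have := (hbN i).1.mp hlt
    linarith
  have hab : ∀ i j, a i j = b i j := fun i j =>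
    all_eq i a b ha01 hb01 haz hbz hafin hbfin hadesc hbdesc hsum j
  refine ⟨?_, hab⟩
  by_contra hne
  rcases lt_or_gt_of_ne hne with h | h
  · obtain ⟨n, hn, hnb⟩ := WithTop.lt_iff_exists_coe.mp h
    have h1 : ¬ ((n : ℕ∞) < N₁) := by rw [hn]; exact lt_irrefl _
    have h2 : 0 < b n 0 := (hbN n).1.mp hnb
    have h3 : a n 0 = 0 := (haN n).2 h1 0
    rw [hab n 0] at h3
    linarith
  · obtain ⟨n, hn, hnb⟩ := WithTop.lt_iff_exists_coe.mp h
    have h1 : ¬ ((n : ℕ∞) < N₂) := by rw [hn]; exact lt_irrefl _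
    have h2 : 0 < a n 0 := (haN n).1.mp hnb
    have h3 : b n 0 = 0 := (hbN n).2 h1 0
    rw [← hab n 0] at h3
    linarith
end

section
/- Let A be a real symmetric 2×2 matrix A = [[u, v], [v, t]]. There exists a vector x ∈ ℝ² with both entries nonnegative such that xᵀAx > 0 if and only if at least one of the following holds: (i) u > 0, (ii) t > 0, or (iii) u ≤ 0, t ≤ 0, and √(ut) < v. -/
open Matrix

lemma qform_aux (u v t : ℝ) (x : Fin 2 → ℝ) :
    x ⬝ᵥ (!![u, v; v, t]).mulVec x =
      u * x 0 * x 0 + 2 * v * (x 0 * x 1) + t * x 1 * x 1 := by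
  simp [Matrix.mulVec, dotProduct, Fin.sum_univ_two]
  ring

/-- For a real symmetric 2×2 matrix `A = [[u, v], [v, t]]`, there is a vector `x` with
nonnegative entries such that `xᵀAx > 0` iff `u > 0`, or `t > 0`, or
(`u ≤ 0`, `t ≤ 0` and `√(ut) < v`). -/
theorem stmt11 (u v t : ℝ) :
    (∃ x : Fin 2 → ℝ, (∀ i, 0 ≤ x i) ∧ 0 < x ⬝ᵥ (!![u, v; v, t]).mulVec x) ↔
      (0 < u ∨ 0 < t ∨ (u ≤ 0 ∧ t ≤ 0 ∧ Real.sqrt (u * t) < v)) := by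
  constructor
  · rintro ⟨x, hx, hq⟩
    rw [qform_aux] at hq
    by_cases hu : 0 < u
    · exact Or.inl hu
    by_cases ht : 0 < t
    · exact Or.inr (Or.inl ht)
    push_neg at hu ht
    refine Or.inr (Or.inr ⟨hu, ht, ?_⟩)
    have ha0 : 0 ≤ x 0 := hx 0
    have hb0 : 0 ≤ x 1 := hx 1
    have ha : 0 < x 0 := by
      rcases ha0.lt_or_eq with h | h
      · exact h
      · exfalso; rw [← h] at hq; norm_num at hq
        nlinarith [mul_nonneg hb0 hb0]
    have hb : 0 < x 1 := by
      rcases hb0.lt_or_eq with h | h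
      · exact h
      · exfalso; rw [← h] at hq; norm_num at hq
        nlinarith [mul_nonneg ha0 ha0]
    set a := x 0
    set b := x 1
    have hut : 0 ≤ u * t := by nlinarith
    set s := Real.sqrt (u * t) with hs
    have hs0 : 0 ≤ s := Real.sqrt_nonneg _
    have hs2 : s ^ 2 = u * t := Real.sq_sqrt hut
    by_contra hv
    push_neg at hv
    have hP : 0 ≤ -(u * a * a + t * b * b) := by
      nlinarith [mul_nonneg ha0 ha0, mul_nonneg hb0 hb0]
    have hQ : 0 ≤ 2 * s * (a * b) := by positivity
    have h1 : -(u * a * a + t * b * b) < 2 * v * (a * b) := by linarith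
    have h2 : 2 * v * (a * b) ≤ 2 * s * (a * b) := by nlinarith [mul_pos ha hb]
    have hsub : s ^ 2 * (a * b) ^ 2 = u * t * (a * b) ^ 2 := by rw [hs2]
    have h3 : (2 * s * (a * b)) ^ 2 ≤ (u * a * a + t * b * b) ^ 2 := by
      nlinarith [sq_nonneg (u * a * a - t * b * b), hsub]
    nlinarith [h1, h2, h3, hP, hQ]
  · rintro (hu | ht | ⟨hu, ht, hv⟩)
    · refine ⟨![1, 0], by intro i; fin_cases i <;> norm_num, ?_⟩
      rw [qform_aux]; norm_num; linarith
    · refine ⟨![0, 1], by intro i; fin_cases i <;> norm_num, ?_⟩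
      rw [qform_aux]; norm_num; linarith
    · have hut : 0 ≤ u * t := by nlinarith
      have hs0 : 0 ≤ Real.sqrt (u * t) := Real.sqrt_nonneg _
      have hv0 : 0 < v := lt_of_le_of_lt hs0 hv
      rcases eq_or_lt_of_le hu with hu0 | hu0
      · -- u = 0
        refine ⟨![1 - t, v], ?_, ?_⟩
        · intro i; fin_cases i <;> simp <;> linarith
        · rw [qform_aux]
          simp only [Matrix.cons_val_zero, Matrix.cons_val_one, Matrix.head_cons, hu0]
          nlinarith [mul_pos hv0 hv0]
      rcases eq_or_lt_of_le ht with ht0 | ht0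
      · -- t = 0
        refine ⟨![v, 1 - u], ?_, ?_⟩
        · intro i; fin_cases i <;> simp <;> linarith
        · rw [qform_aux]
          simp only [Matrix.cons_val_zero, Matrix.cons_val_one, Matrix.head_cons, ht0]
          nlinarith [mul_pos hv0 hv0]
      · refine ⟨![Real.sqrt (-t), Real.sqrt (-u)], ?_, ?_⟩
        · intro i; fin_cases i <;> simp [Real.sqrt_nonneg]
        · rw [qform_aux]
          have h1 : Real.sqrt (-t) ^ 2 = -t := Real.sq_sqrt (by linarith)
          have h2 : Real.sqrt (-u) ^ 2 = -u := Real.sq_sqrt (by linarith)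
          have h3 : Real.sqrt (-t) * Real.sqrt (-u) = Real.sqrt (u * t) := by
            rw [← Real.sqrt_mul (by linarith)]; ring_nf
          have hs2 : Real.sqrt (u * t) ^ 2 = u * t := Real.sq_sqrt hut
          have hspos : 0 < Real.sqrt (u * t) := by
            apply Real.sqrt_pos.mpr; nlinarith
          simp only [Matrix.cons_val_zero, Matrix.cons_val_one, Matrix.head_cons]
          nlinarith [mul_lt_mul_of_pos_right hv hspos]
end

section
/- Let μ and μ̃ be probability measures on ℝ such that μ̃ has density f with respect to μ, with f bounded by M. For ε ∈ (0,1), let ν_ε be the mixture ν_ε = εμ̃ + (1−ε)μ. Then the Hellinger affinity ρ(μ, ν_ε) = ∫√(εf + 1−ε) dμ satisfies ρ(μ, ν_ε) ≥ 1 − Cε² for a constant C depending only on μ and μ̃. -/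
open MeasureTheory

/-- If `μ̃` has density `f ≤ M` with respect to the probability measure `μ` on `ℝ`
(so `f ≥ 0` and `∫ f dμ = 1`), then the Hellinger affinity of `μ` and the mixture
`ν_ε = ε μ̃ + (1 − ε) μ`, namely `∫ √(εf + 1 − ε) dμ`, is at least `1 − Cε²` for a
constant `C` depending only on `μ` and `μ̃`, uniformly over `ε ∈ (0,1)`. -/
theorem stmt14 (μ : Measure ℝ) [IsProbabilityMeasure μ]
    (f : ℝ → ℝ) (hf : Measurable f) (hf0 : ∀ t, 0 ≤ f t)
    (M : ℝ) (hfM : ∀ t, f t ≤ M) (hf1 : ∫ t, f t ∂μ = 1) :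
    ∃ C : ℝ, 0 < C ∧ ∀ ε : ℝ, 0 < ε → ε < 1 →
      1 - C * ε ^ 2 ≤ ∫ t, Real.sqrt (ε * f t + (1 - ε)) ∂μ := by
  refine ⟨(M + 1) ^ 2 / 2 + 1, by positivity, fun ε hε0 hε1 => ?_⟩
  set C : ℝ := (M + 1) ^ 2 / 2 + 1 with hC
  have hfint : Integrable f μ := by
    refine Integrable.mono' (integrable_const M) hf.aestronglyMeasurable ?_
    filter_upwards with t
    rw [Real.norm_eq_abs, abs_of_nonneg (hf0 t)]
    exact hfM t
  have harg : ∀ t, 0 ≤ ε * f t + (1 - ε) := fun t => by nlinarith [hf0 t]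
  have hsint : Integrable (fun t => Real.sqrt (ε * f t + (1 - ε))) μ := by
    refine Integrable.mono' (integrable_const (Real.sqrt (ε * M + 1)))
      (hf.const_mul ε |>.add_const (1 - ε)).sqrt.aestronglyMeasurable ?_
    filter_upwards with t
    rw [Real.norm_eq_abs, abs_of_nonneg (Real.sqrt_nonneg _)]
    apply Real.sqrt_le_sqrt
    nlinarith [hfM t]
  have hlinint : Integrable (fun t => 1 - C * ε ^ 2 + ε / 2 * (f t - 1)) μ :=
    (integrable_const _).add (((hfint.sub (integrable_const 1)).const_mul _))
  have hM0 : 0 ≤ M := le_trans (hf0 0) (hfM 0)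
  have key : ∀ t, 1 - C * ε ^ 2 + ε / 2 * (f t - 1) ≤ Real.sqrt (ε * f t + (1 - ε)) := by
    intro t
    set s := Real.sqrt (ε * f t + (1 - ε)) with hs
    have hs0 : 0 ≤ s := Real.sqrt_nonneg _
    have hs2 : s ^ 2 = ε * f t + (1 - ε) := Real.sq_sqrt (harg t)
    have hfb : f t ≤ M := hfM t
    have hf0t : 0 ≤ f t := hf0 t
    have hA : 1 + (s ^ 2 - 1) / 2 - (s ^ 2 - 1) ^ 2 / 2 ≤ s := by
      nlinarith [mul_nonneg (mul_nonneg (sq_nonneg (s - 1)) hs0)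
        (by linarith : (0:ℝ) ≤ s + 2)]
    have hB : (s ^ 2 - 1) ^ 2 = ε ^ 2 * (f t - 1) ^ 2 := by
      rw [hs2]; ring
    have hC2 : (f t - 1) ^ 2 ≤ (M + 1) ^ 2 + 2 := by
      nlinarith [mul_nonneg hf0t (by linarith : (0:ℝ) ≤ M - f t)]
    have hD : ε ^ 2 * (f t - 1) ^ 2 ≤ ε ^ 2 * ((M + 1) ^ 2 + 2) :=
      mul_le_mul_of_nonneg_left hC2 (sq_nonneg ε)
    have hE : s ^ 2 - 1 = ε * (f t - 1) := by rw [hs2]; ring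
    rw [hB] at hA
    rw [hE] at hA
    have : C * ε ^ 2 = ε ^ 2 * ((M + 1) ^ 2 + 2) / 2 := by rw [hC]; ring
    linarith
  have hg2 : Integrable (fun t => ε / 2 * (f t - 1)) μ :=
    (hfint.sub (integrable_const 1)).const_mul _
  calc 1 - C * ε ^ 2 = ∫ t, (1 - C * ε ^ 2 + ε / 2 * (f t - 1)) ∂μ := by
        rw [integral_add (integrable_const _) hg2, integral_const_mul,
          integral_sub hfint (integrable_const 1), hf1]
        simp
    _ ≤ _ := integral_mono hlinint hsint key
end
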